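/- arXiv:1306.5154 — 2 statements merged into one kernel-verified Lean document; each statement's English description precedes it below -/
import Mathlib

section
/- The number of edges of the Fibonacci cube Γ_n equals (nF_{n+1} + 2(n+1)F_n)/5, where F_k denotes the Fibonacci numbers. -/
open Finset

/-- Number of positions where two binary strings differ. -/
def diffCount {n : ℕ} (u v : Fin n → Bool) : ℕ :=
  (Finset.univ.filter fun i => u i ≠ v i).card

/-- Fibonacci strings: binary strings with no two consecutive 1's. -/
def FibPred (n : ℕ) (v : Fin n → Bool) : Prop :=
  ∀ i j : Fin n, (j : ℕ) = (i : ℕ) + 1 → ¬(v i = true ∧ v j = true)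

instance (n : ℕ) : DecidablePred (FibPred n) := fun v => by
  unfold FibPred; infer_instance

/-- Vertices of the Fibonacci cube: Fibonacci strings of length n. -/
def FibV (n : ℕ) := {v : Fin n → Bool // FibPred n v}

instance (n : ℕ) : Fintype (FibV n) := Subtype.fintype _
instance (n : ℕ) : DecidableEq (FibV n) := Subtype.instDecidableEq

/-- The Fibonacci cube Γ_n: Fibonacci strings adjacent iff they differ in exactly one position. -/
def fibCube (n : ℕ) : SimpleGraph (FibV n) where
  Adj u v := diffCount u.1 v.1 = 1
  symm := by
    constructor
    intro u v h
    have he : (Finset.univ.filter fun i => v.1 i ≠ u.1 i)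
        = (Finset.univ.filter fun i => u.1 i ≠ v.1 i) := by
      apply Finset.filter_congr; intro i _; exact ne_comm
    simpa [diffCount, he] using h
  loopless := by constructor; intro u h; simp [diffCount] at h

instance (n : ℕ) : DecidableRel (fibCube n).Adj := fun u v => Nat.decEq _ _

/-!
Clearing a 1 in a Fibonacci string leaves a Fibonacci string, so every edge of Γ_n joins a
string `w` to `w` with one of its 1's cleared, and the edge determines both `w` and that position.
Hence the number of edges is the total number `T n` of 1's over all Fibonacci strings of length `n`.
Splitting the strings of length `n + 2` into those ending in `0` and those ending in `01` gives
`|V (n + 2)| = |V (n + 1)| + |V n|`, so `|V n| = F (n + 2)`, and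
`T (n + 2) = T (n + 1) + T n + F (n + 2)`, from which `5 T n = n F (n + 1) + 2 (n + 1) F n`
follows by induction.
-/

variable {n : ℕ}

lemma diffCount_comm (u v : Fin n → Bool) : diffCount u v = diffCount v u :=
  hammingDist_comm u v

lemma diffCount_eq_one_iff {u v : Fin n → Bool} :
    diffCount u v = 1 ↔ ∃ i, v = Function.update u i (!u i) := by
  refine card_eq_one.trans (exists_congr fun i => ?_)
  simp only [Finset.ext_iff, mem_filter, mem_univ, true_and, mem_singleton, funext_iff,
    Function.update_apply]
  refine forall_congr' fun j => ?_
  by_cases hj : j = i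
  · subst hj
    cases u j <;> cases v j <;> simp
  · simp [hj, eq_comm]

def weight (v : Fin n → Bool) : ℕ := #{i | v i = true}

lemma weight_snoc (v : Fin n → Bool) (b : Bool) :
    weight (Fin.snoc v b) = weight v + b.toNat := by
  simp only [weight, card_filter, Fin.sum_univ_castSucc, Fin.snoc_castSucc, Fin.snoc_last]
  cases b <;> rfl

/-- The subgraph of the hypercube induced on the strings satisfying `P`;
`fibCube n` is `subcube (FibPred n)` by definition. -/
def subcube (P : (Fin n → Bool) → Prop) : SimpleGraph {v // P v} where
  Adj u v := diffCount u.1 v.1 = 1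
  symm := ⟨fun u v h => (diffCount_comm v.1 u.1).trans h⟩
  loopless := ⟨fun u h => by simp [diffCount] at h⟩

instance (P : (Fin n → Bool) → Prop) : DecidableRel (subcube P).Adj :=
  fun _ _ => Nat.decEq _ _

section DownClosed

variable {P : (Fin n → Bool) → Prop} (hP : ∀ v i, P v → P (Function.update v i false))

def clearBit (v : {v // P v}) (i : Fin n) : {v // P v} :=
  ⟨Function.update v.1 i false, hP v.1 i v.2⟩

@[simp]
lemma clearBit_val (v : {v // P v}) (i : Fin n) :
    (clearBit hP v i).1 = Function.update v.1 i false :=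
  rfl

lemma subcube_adj_clearBit {v : {v // P v}} {i : Fin n} (hi : v.1 i = true) :
    (subcube P).Adj v (clearBit hP v i) :=
  diffCount_eq_one_iff.2 ⟨i, by simp [hi]⟩

lemma exists_clearBit_of_subcube_adj {u v : {v // P v}} (h : (subcube P).Adj u v) :
    ∃ w i, w.1 i = true ∧ s(w, clearBit hP w i) = s(u, v) := by
  obtain ⟨i, hv⟩ := diffCount_eq_one_iff.1 h
  cases hu : u.1 i
  · rw [hu, Bool.not_false] at hv
    have hvu : clearBit hP v i = u := Subtype.ext <| by
      rw [clearBit_val, hv, Function.update_idem, ← hu, Function.update_eq_self]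
    exact ⟨v, i, by simp [hv], by rw [hvu, Sym2.eq_swap]⟩
  · rw [hu] at hv
    exact ⟨u, i, hu, congrArg _ (Subtype.ext hv.symm)⟩

lemma eq_of_sym2_clearBit_eq {v w : {v // P v}} {i j : Fin n} (hi : v.1 i = true)
    (hj : w.1 j = true) (h : s(v, clearBit hP v i) = s(w, clearBit hP w j)) : v = w ∧ i = j := by
  rcases Sym2.eq_iff.1 h with ⟨rfl, hij⟩ | ⟨rfl, hwv⟩
  · refine ⟨rfl, by_contra fun hne => ?_⟩
    simpa [Function.update_of_ne hne, hi] using congrArg (fun x => x.1 i) hij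
  · simpa [Function.update_apply, hj] using congrArg (fun x => x.1 j) hwv

end DownClosed

lemma card_edgeFinset_subcube {P : (Fin n → Bool) → Prop} [DecidablePred P]
    (hP : ∀ v i, P v → P (Function.update v i false)) :
    #(subcube P).edgeFinset = ∑ v : {v // P v}, weight v.1 := by
  simp only [weight]
  rw [← card_sigma]
  symm
  refine card_bij (fun p _ => s(p.1, clearBit hP p.1 p.2)) ?_ ?_ ?_
  · rintro ⟨v, i⟩ hi
    simp only [mem_sigma, mem_filter, mem_univ, true_and] at hi
    exact (subcube P).mem_edgeFinset.2 (subcube_adj_clearBit hP hi)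
  · rintro ⟨v, i⟩ hi ⟨w, j⟩ hj h
    simp only [mem_sigma, mem_filter, mem_univ, true_and] at hi hj
    obtain ⟨rfl, rfl⟩ := eq_of_sym2_clearBit_eq hP hi hj h
    rfl
  · intro e he
    induction e using Sym2.ind with | h u v => ?_
    obtain ⟨w, i, hi, hw⟩ := exists_clearBit_of_subcube_adj hP ((subcube P).mem_edgeFinset.1 he)
    exact ⟨⟨w, i⟩, by simpa using hi, hw⟩

lemma fibPred_update_false (v : Fin n → Bool) (i : Fin n) (hv : FibPred n v) :
    FibPred n (Function.update v i false) := by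
  intro a b hab ⟨ha, hb⟩
  refine hv a b hab ⟨?_, ?_⟩
  · by_cases h : a = i
    · simp [h] at ha
    · rwa [Function.update_of_ne h] at ha
  · by_cases h : b = i
    · simp [h] at hb
    · rwa [Function.update_of_ne h] at hb

lemma fibPred_snoc (v : Fin n → Bool) (b : Bool) :
    FibPred (n + 1) (Fin.snoc v b) ↔
      FibPred n v ∧ ∀ i : Fin n, (i : ℕ) + 1 = n → ¬(v i = true ∧ b = true) := by
  refine ⟨fun h => ⟨fun i j hij => ?_, fun i hi => ?_⟩, fun ⟨hv, hb⟩ i j hij => ?_⟩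
  · simpa using h i.castSucc j.castSucc hij
  · simpa using h i.castSucc (Fin.last n) hi.symm
  · have hi : i ≠ Fin.last n := Fin.ne_last_of_lt (b := j) (Fin.lt_def.2 (by omega))
    obtain ⟨i, rfl⟩ := Fin.exists_castSucc_eq.2 hi
    induction j using Fin.lastCases with
    | last => simpa using hb i hij.symm
    | cast j => simpa using hv i j hij

namespace FibV

def snoc0 (v : FibV n) : FibV (n + 1) :=
  ⟨Fin.snoc v.1 false, (fibPred_snoc _ _).2 ⟨v.2, by simp⟩⟩

def snoc01 (v : FibV n) : FibV (n + 2) :=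
  ⟨Fin.snoc (snoc0 v).1 true, (fibPred_snoc _ _).2 ⟨(snoc0 v).2, fun i hi => by
    obtain rfl : i = Fin.last n := Fin.ext (Nat.succ_injective hi)
    simp [snoc0]⟩⟩

lemma snoc0_injective : Function.Injective (snoc0 : FibV n → FibV (n + 1)) :=
  fun _ _ h => Subtype.ext <|
    Fin.snoc_left_injective (α := fun _ => Bool) _ <| congrArg Subtype.val h

lemma snoc01_injective : Function.Injective (snoc01 : FibV n → FibV (n + 2)) :=
  fun _ _ h => snoc0_injective <| Subtype.ext <|
    Fin.snoc_left_injective (α := fun _ => Bool) _ <| congrArg Subtype.val h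

lemma snoc0_ne_snoc01 (u : FibV (n + 1)) (v : FibV n) : snoc0 u ≠ snoc01 v := fun h => by
  simpa [snoc0, snoc01] using congrArg (fun w => w.1 (Fin.last _)) h

lemma exists_snoc0_or_snoc01 (w : FibV (n + 2)) :
    (∃ u, snoc0 u = w) ∨ ∃ v, snoc01 v = w := by
  have hw : FibPred (n + 2) (Fin.snoc (Fin.init w.1) (w.1 (Fin.last _))) := by
    rw [Fin.snoc_init_self]; exact w.2
  obtain ⟨hu, hlast⟩ := (fibPred_snoc _ _).1 hw
  cases hb : w.1 (Fin.last _)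
  · exact .inl ⟨⟨_, hu⟩, Subtype.ext (by simp [snoc0, ← hb])⟩
  · have hinit : Fin.snoc (Fin.init (Fin.init w.1)) false = Fin.init w.1 := by
      have h0 : Fin.init w.1 (Fin.last n) = false := by simpa [hb] using hlast (Fin.last n) rfl
      rw [← h0, Fin.snoc_init_self]
    have hv : FibPred n (Fin.init (Fin.init w.1)) := ((fibPred_snoc _ _).1 (hinit ▸ hu)).1
    refine .inr ⟨⟨_, hv⟩, Subtype.ext ?_⟩
    change Fin.snoc (Fin.snoc (Fin.init (Fin.init w.1)) false) true = w.1
    rw [hinit, ← hb, Fin.snoc_init_self]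

lemma bijective_sumElim_snoc0_snoc01 :
    Function.Bijective (Sum.elim snoc0 snoc01 : FibV (n + 1) ⊕ FibV n → FibV (n + 2)) := by
  refine ⟨snoc0_injective.sumElim snoc01_injective snoc0_ne_snoc01, fun w => ?_⟩
  rcases exists_snoc0_or_snoc01 w with ⟨u, rfl⟩ | ⟨v, rfl⟩
  exacts [⟨.inl u, rfl⟩, ⟨.inr v, rfl⟩]

end FibV

lemma card_fibV (n : ℕ) : Fintype.card (FibV n) = Nat.fib (n + 2) := by
  induction n using Nat.twoStepInduction with
  | zero => decide
  | one => decide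
  | more n ih ih' =>
    rw [← Fintype.card_of_bijective FibV.bijective_sumElim_snoc0_snoc01, Fintype.card_sum,
      ih, ih', Nat.fib_add_two (n := n + 2), add_comm]

def totalWeight (n : ℕ) : ℕ := ∑ v : FibV n, weight v.1

lemma totalWeight_add_two (n : ℕ) :
    totalWeight (n + 2) = totalWeight (n + 1) + totalWeight n + Nat.fib (n + 2) := by
  rw [totalWeight, ← FibV.bijective_sumElim_snoc0_snoc01.sum_comp, Fintype.sum_sum_type]
  simp only [Sum.elim_inl, Sum.elim_inr, FibV.snoc0, FibV.snoc01, weight_snoc, Bool.toNat_false,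
    Bool.toNat_true, add_zero, sum_add_distrib, sum_const, card_univ, smul_eq_mul, mul_one,
    totalWeight, ← card_fibV]
  ring

lemma five_mul_totalWeight (n : ℕ) :
    5 * totalWeight n = n * Nat.fib (n + 1) + 2 * (n + 1) * Nat.fib n := by
  induction n using Nat.twoStepInduction with
  | zero => decide
  | one => decide
  | more n ih ih' =>
    rw [totalWeight_add_two, mul_add, mul_add, ih, ih', Nat.fib_add_two (n := n + 1),
      Nat.fib_add_two (n := n)]
    ring

/-- The number of edges of the Fibonacci cube Γ_n equals (nF_{n+1} + 2(n+1)F_n)/5. -/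
theorem card_edges_fibCube (n : ℕ) :
    (fibCube n).edgeFinset.card =
      (n * Nat.fib (n + 1) + 2 * (n + 1) * Nat.fib n) / 5 := by
  have hedges : (fibCube n).edgeFinset.card = totalWeight n :=
    card_edgeFinset_subcube fibPred_update_false
  rw [hedges, ← five_mul_totalWeight, Nat.mul_div_cancel_left _ (by norm_num)]
end

section
/- The hypercube density of the family of Fibonacci cubes {Γ_n} equals (5−√5)/(5 log₂ φ); that is, (2|E(Γ_n)|)/(|V(Γ_n)|·log₂|V(Γ_n)|) converges to (5−√5)/(5 log₂ φ) as n → ∞, where φ = (1+√5)/2. -/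
open Finset

/-!
Splitting Fibonacci strings by their prefix `0` or `10` gives
`|V(Γ_{n+2})| = |V(Γ_{n+1})| + |V(Γ_n)|`, and sorting the ordered adjacent pairs by the prefixes
of their endpoints gives `|E(Γ_{n+2})| = |E(Γ_{n+1})| + |E(Γ_n)| + |V(Γ_n)|`, the last term
counting the edges `00w ~ 10w`. Hence `|V(Γ_n)| = F_{n+2}` and `5|E(Γ_n)| = nF_{n+1} + 2(n+1)F_n`,
so the density is `(2/5)(F_{n+1}/F_{n+2} + 2(1 + 1/n) F_n/F_{n+2}) / (log₂ F_{n+2} / n)`.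
The two ratios tend to `-ψ = 1/φ` and `ψ²`, and `log₂ F_{n+2} / n → log₂ φ` by Cesàro averaging
of `log (F_{k+1} / F_k) → log φ`; finally `-ψ + 2ψ² = ψ + 2 = (5 - √5)/2`.
-/

lemma diffCount_cons {n : ℕ} (a b : Bool) (u v : Fin n → Bool) :
    diffCount (Fin.cons a u) (Fin.cons b v) = (if a = b then 0 else 1) + diffCount u v := by
  simp only [diffCount, card_filter, Fin.sum_univ_succ, Fin.cons_zero, Fin.cons_succ, ne_eq,
    ite_not]

lemma diffCount_eq_zero_iff {n : ℕ} {u v : Fin n → Bool} : diffCount u v = 0 ↔ u = v := by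
  simp [diffCount, filter_eq_empty_iff, funext_iff]

lemma FibPred.tail {n : ℕ} {v : Fin (n + 1) → Bool} (h : FibPred (n + 1) v) :
    FibPred n (Fin.tail v) :=
  fun i j hij => h i.succ j.succ (by simp [hij])

lemma FibPred.cons_false {n : ℕ} {w : Fin n → Bool} (h : FibPred n w) :
    FibPred (n + 1) (Fin.cons false w) := by
  intro i j hij
  cases i using Fin.cases with
  | zero => simp
  | succ i =>
    cases j using Fin.cases with
    | zero => simp at hij
    | succ j => simpa using h i j (by simpa using hij)

lemma FibPred.cons_true {n : ℕ} {w : Fin (n + 1) → Bool} (h : FibPred (n + 1) w)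
    (h0 : w 0 = false) : FibPred (n + 2) (Fin.cons true w) := by
  intro i j hij
  cases i using Fin.cases with
  | zero =>
    obtain rfl : j = Fin.succ 0 := Fin.ext (by simpa using hij)
    simp [h0]
  | succ i =>
    cases j using Fin.cases with
    | zero => simp at hij
    | succ j => simpa using h i j (by simpa using hij)

lemma fibCube_adj {n : ℕ} {u v : FibV n} : (fibCube n).Adj u v ↔ diffCount u.1 v.1 = 1 :=
  Iff.rfl

namespace FibV

variable {n : ℕ}

@[ext]
lemma ext {u v : FibV n} (h : u.1 = v.1) : u = v :=
  Subtype.ext h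

def cons0 (w : FibV n) : FibV (n + 1) := ⟨Fin.cons false w.1, w.2.cons_false⟩

def cons10 (w : FibV n) : FibV (n + 2) :=
  ⟨Fin.cons true (Fin.cons false w.1), w.2.cons_false.cons_true rfl⟩

lemma cons0_injective : Function.Injective (cons0 : FibV n → FibV (n + 1)) :=
  fun _ _ h => FibV.ext <|
    Fin.cons_right_injective (α := fun _ => Bool) false (congrArg Subtype.val h)

lemma cons10_injective : Function.Injective (cons10 : FibV n → FibV (n + 2)) :=
  fun _ _ h => cons0_injective <| FibV.ext <|
    Fin.cons_right_injective (α := fun _ => Bool) true (congrArg Subtype.val h)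

lemma cons0_ne_cons10 (u : FibV (n + 1)) (v : FibV n) : cons0 u ≠ cons10 v :=
  fun h => by simpa [cons0, cons10] using congrArg (·.1 0) h

lemma exists_cons0_eq_or_exists_cons10_eq (v : FibV (n + 2)) :
    (∃ u, cons0 u = v) ∨ ∃ w, cons10 w = v := by
  cases h0 : v.1 0
  · refine .inl ⟨⟨Fin.tail v.1, v.2.tail⟩, FibV.ext ?_⟩
    simp [cons0, ← h0]
  · have h1 : v.1 1 = false := by simpa [h0] using v.2 0 1 rfl
    refine .inr ⟨⟨Fin.tail (Fin.tail v.1), v.2.tail.tail⟩, FibV.ext ?_⟩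
    conv_rhs => rw [← Fin.cons_self_tail v.1, ← Fin.cons_self_tail (Fin.tail v.1)]
    simp [cons10, h0, h1, Fin.tail]

noncomputable def sumEquiv (n : ℕ) : FibV (n + 1) ⊕ FibV n ≃ FibV (n + 2) :=
  Equiv.ofBijective (Sum.elim cons0 cons10) <| by
    refine ⟨?_, fun v => ?_⟩
    · rintro (u | u) (v | v) h
      all_goals simp only [Sum.elim_inl, Sum.elim_inr] at h
      · rw [cons0_injective h]
      · exact absurd h (cons0_ne_cons10 u v)
      · exact absurd h.symm (cons0_ne_cons10 v u)
      · rw [cons10_injective h]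
    · rcases exists_cons0_eq_or_exists_cons10_eq v with ⟨u, rfl⟩ | ⟨w, rfl⟩
      exacts [⟨.inl u, rfl⟩, ⟨.inr w, rfl⟩]

lemma sum_add_two {M : Type*} [AddCommMonoid M] (f : FibV (n + 2) → M) :
    ∑ v, f v = ∑ u, f (cons0 u) + ∑ w, f (cons10 w) := by
  rw [← (sumEquiv n).sum_comp, Fintype.sum_sum_type]
  rfl

lemma card_add_two (n : ℕ) :
    Fintype.card (FibV (n + 2)) = Fintype.card (FibV (n + 1)) + Fintype.card (FibV n) := by
  rw [← Fintype.card_congr (sumEquiv n), Fintype.card_sum]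

lemma card_eq_fib (n : ℕ) : Fintype.card (FibV n) = Nat.fib (n + 2) := by
  induction n using Nat.twoStepInduction with
  | zero => decide
  | one => decide
  | more n ih ih' => rw [card_add_two, ih, ih', Nat.fib_add_two (n := n + 2)]; ring

lemma adj_cons0_cons0 {u v : FibV (n + 1)} :
    (fibCube (n + 2)).Adj (cons0 u) (cons0 v) ↔ (fibCube (n + 1)).Adj u v := by
  rw [fibCube_adj, fibCube_adj]
  simp [cons0, diffCount_cons]

lemma adj_cons10_cons10 {u v : FibV n} :
    (fibCube (n + 2)).Adj (cons10 u) (cons10 v) ↔ (fibCube n).Adj u v := by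
  rw [fibCube_adj, fibCube_adj]
  simp [cons10, diffCount_cons]

lemma adj_cons0_cons10 {u : FibV (n + 1)} {v : FibV n} :
    (fibCube (n + 2)).Adj (cons0 u) (cons10 v) ↔ u = cons0 v := by
  rw [fibCube_adj, FibV.ext_iff]
  simp [cons0, cons10, diffCount_cons, diffCount_eq_zero_iff]

lemma adj_cons10_cons0 {u : FibV (n + 1)} {v : FibV n} :
    (fibCube (n + 2)).Adj (cons10 v) (cons0 u) ↔ u = cons0 v :=
  (fibCube _).adj_comm _ _ |>.trans adj_cons0_cons10

end FibV

lemma SimpleGraph.sum_sum_ite_adj_eq_twice_card_edges {V : Type*} [Fintype V] (G : SimpleGraph V)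
    [DecidableRel G.Adj] : ∑ u, ∑ v, (if G.Adj u v then 1 else 0) = 2 * #G.edgeFinset := by
  simp_rw [← G.sum_degrees_eq_twice_card_edges, ← G.degree_eq_sum_if_adj, Nat.cast_id]

lemma card_edgeFinset_fibCube_add_two (n : ℕ) :
    #(fibCube (n + 2)).edgeFinset =
      #(fibCube (n + 1)).edgeFinset + #(fibCube n).edgeFinset + Fintype.card (FibV n) := by
  have h : 2 * #(fibCube (n + 2)).edgeFinset = 2 * #(fibCube (n + 1)).edgeFinset +
      2 * #(fibCube n).edgeFinset + 2 * Fintype.card (FibV n) := by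
    have hcross : ∑ u, ∑ v : FibV n, (if u = FibV.cons0 v then 1 else 0) = ∑ _v : FibV n, 1 := by
      rw [sum_comm]; simp
    simp only [← SimpleGraph.sum_sum_ite_adj_eq_twice_card_edges, FibV.sum_add_two,
      FibV.adj_cons0_cons0, FibV.adj_cons10_cons10, FibV.adj_cons0_cons10, FibV.adj_cons10_cons0,
      sum_add_distrib, hcross, sum_ite_eq', mem_univ, if_true, Fintype.card_eq_sum_ones]
    ring
  omega

lemma card_edgeFinset_fibCube (n : ℕ) :
    5 * #(fibCube n).edgeFinset = n * Nat.fib (n + 1) + 2 * (n + 1) * Nat.fib n := by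
  induction n using Nat.twoStepInduction with
  | zero => decide
  | one => decide
  | more n ih ih' =>
    rw [card_edgeFinset_fibCube_add_two, mul_add, mul_add, ih, ih', FibV.card_eq_fib,
      Nat.fib_add_two (n := n + 1), Nat.fib_add_two (n := n)]
    ring

open Filter Topology Real goldenRatio

lemma tendsto_log_div_natCast_of_tendsto_succ_div {a : ℕ → ℝ} {c : ℝ} (ha : ∀ n, 0 < a n)
    (hc : 0 < c) (h : Tendsto (fun n => a (n + 1) / a n) atTop (𝓝 c)) :
    Tendsto (fun n : ℕ => log (a n) / n) atTop (𝓝 (log c)) := by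
  have hsteps : Tendsto (fun i => log (a (i + 1)) - log (a i)) atTop (𝓝 (log c)) := by
    refine ((continuousAt_log hc.ne').tendsto.comp h).congr fun i => ?_
    simp [log_div (ha _).ne' (ha _).ne']
  have hmean := hsteps.cesaro.add (tendsto_const_div_atTop_nhds_zero_nat (log (a 0)))
  rw [add_zero] at hmean
  refine hmean.congr fun n => ?_
  rw [sum_range_sub (fun i => log (a i))]
  ring

lemma tendsto_logb_fib_div_natCast :
    Tendsto (fun n : ℕ => logb 2 (Nat.fib (n + 2)) / n) atTop (𝓝 (logb 2 φ)) := by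
  have hratio : Tendsto (fun n => (Nat.fib (n + 2 + 1) : ℝ) / Nat.fib (n + 2)) atTop (𝓝 φ) :=
    tendsto_fib_succ_div_fib_atTop.comp (tendsto_add_atTop_nat 2)
  have hlog := (tendsto_log_div_natCast_of_tendsto_succ_div (a := fun n => (Nat.fib (n + 2) : ℝ))
    (fun n => Nat.cast_pos.2 (Nat.fib_pos.2 (by omega))) goldenRatio_pos hratio).div_const (log 2)
  refine hlog.congr fun n => ?_
  simp only [logb, div_right_comm]

lemma tendsto_fib_div_fib_add_two :
    Tendsto (fun n => (Nat.fib n : ℝ) / Nat.fib (n + 2)) atTop (𝓝 (ψ ^ 2)) := by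
  have h := tendsto_fib_div_fib_succ_atTop.mul
    (tendsto_fib_div_fib_succ_atTop.comp (tendsto_add_atTop_nat 1))
  rw [← pow_two, neg_sq] at h
  refine h.congr fun n => ?_
  simp only [Function.comp_apply]
  exact div_mul_div_cancel₀ (Nat.cast_ne_zero.2 (Nat.fib_pos.2 n.succ_pos).ne')

lemma fibCube_density_eq {n : ℕ} (hn : n ≠ 0) :
    2 * (#(fibCube n).edgeFinset : ℝ) /
        (Fintype.card (FibV n) * logb 2 (Fintype.card (FibV n))) =
      2 / 5 * ((Nat.fib (n + 1) : ℝ) / Nat.fib (n + 2) +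
        2 * (1 + 1 / n) * ((Nat.fib n : ℝ) / Nat.fib (n + 2))) /
        (logb 2 (Nat.fib (n + 2)) / n) := by
  have hE : (5 * #(fibCube n).edgeFinset : ℝ) =
      n * Nat.fib (n + 1) + 2 * (n + 1) * Nat.fib n := by
    exact_mod_cast card_edgeFinset_fibCube n
  have hV : (0 : ℝ) < Nat.fib (n + 2) := Nat.cast_pos.2 (Nat.fib_pos.2 (by omega))
  have hn' : (n : ℝ) ≠ 0 := Nat.cast_ne_zero.2 hn
  rw [FibV.card_eq_fib]
  rcases eq_or_ne (logb 2 (Nat.fib (n + 2))) 0 with hL | hL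
  · simp [hL]
  · field_simp
    linear_combination hE

/-- The hypercube density of the family of Fibonacci cubes equals (5-√5)/(5 log₂ φ). -/
theorem fibCube_density_tendsto :
    Filter.Tendsto
      (fun n : ℕ =>
        (2 * ((fibCube n).edgeFinset.card : ℝ)) /
          ((Fintype.card (FibV n)) * Real.logb 2 (Fintype.card (FibV n))))
      Filter.atTop
      (nhds ((5 - Real.sqrt 5) / (5 * Real.logb 2 ((1 + Real.sqrt 5) / 2)))) := by
  have hinv : Tendsto (fun n : ℕ => 1 + 1 / (n : ℝ)) atTop (𝓝 (1 + 0)) :=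
    tendsto_const_nhds.add tendsto_one_div_atTop_nhds_zero_nat
  have hlim := ((tendsto_fib_div_fib_succ_atTop.comp (tendsto_add_atTop_nat 1)).add
    ((hinv.const_mul 2).mul tendsto_fib_div_fib_add_two)).const_mul (2 / 5) |>.div
    tendsto_logb_fib_div_natCast (logb_pos one_lt_two one_lt_goldenRatio).ne'
  have hvalue : 2 / 5 * (-ψ + 2 * (1 + 0) * ψ ^ 2) / logb 2 φ =
      (5 - √5) / (5 * logb 2 ((1 + √5) / 2)) := by
    rw [goldenConj_sq, goldenConj, goldenRatio]
    ring
  rw [← hvalue]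
  refine hlim.congr' ?_
  filter_upwards [eventually_ne_atTop 0] with n hn
  exact (fibCube_density_eq hn).symm
end
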